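/- arXiv:1902.04004 — 2 statements merged into one kernel-verified Lean document; each statement's English description precedes it below -/
import Mathlib

section
/- Let N items be distributed among M slots with n_j ≤ b items in slot j for every j, where b = ⌈N/M⌉ and Σ_j n_j = N. Then Σ_{j=1}^M n_j^2 ≤ ⌊N/b⌋·b^2 + (N − ⌊N/b⌋·b)^2. -/
/-!
Add the slots one at a time, bounding the sum of squares of those seen so far, holding `m`
items, by the value `⌊m/b⌋ b² + (m mod b)²` of the greedy packing of `m` items. Adding a slot
of `a ≤ b` items either stays below the next multiple of `b`, where `a² + r² ≤ (r + a)²`, or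
crosses it, turning `r + a = b + s` into a full slot and a remainder `s`; then
`a² + r² ≤ b² + s²` because `(b - a)(b - r) ≥ 0`.
-/

def greedySqSum (b m : ℕ) : ℕ :=
  m / b * b ^ 2 + (m % b) ^ 2

lemma greedySqSum_mul_add {b r : ℕ} (q : ℕ) (hr : r < b) :
    greedySqSum b (b * q + r) = q * b ^ 2 + r ^ 2 := by
  have hb : 0 < b := by omega
  rw [greedySqSum, Nat.mul_add_div hb, Nat.mul_add_mod, Nat.div_eq_of_lt hr, Nat.mod_eq_of_lt hr,
    add_zero]

lemma sq_add_sq_le_sq_add_sq_of_add_eq {a r b s : ℕ} (ha : a ≤ b) (hr : r ≤ b)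
    (h : r + a = b + s) : a ^ 2 + r ^ 2 ≤ b ^ 2 + s ^ 2 := by
  obtain ⟨d, rfl⟩ := Nat.exists_eq_add_of_le ha
  obtain rfl : r = s + d := by omega
  have hsa : s ≤ a := by omega
  nlinarith

lemma sq_add_greedySqSum_le {a b : ℕ} (m : ℕ) (ha : a ≤ b) :
    a ^ 2 + greedySqSum b m ≤ greedySqSum b (m + a) := by
  rcases Nat.eq_zero_or_pos b with rfl | hb
  · simp [Nat.le_zero.mp ha]
  obtain ⟨q, r, hr, rfl⟩ : ∃ q r, r < b ∧ m = b * q + r :=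
    ⟨m / b, m % b, Nat.mod_lt m hb, (Nat.div_add_mod m b).symm⟩
  rw [greedySqSum_mul_add q hr]
  rcases lt_or_ge (r + a) b with hlt | hge
  · rw [add_assoc, greedySqSum_mul_add q hlt]
    nlinarith
  · obtain ⟨s, hs⟩ : ∃ s, r + a = b + s := Nat.exists_eq_add_of_le hge
    have hsum : b * q + r + a = b * (q + 1) + s := by rw [add_assoc, hs]; ring
    rw [hsum, greedySqSum_mul_add (q + 1) (by omega)]
    nlinarith [sq_add_sq_le_sq_add_sq_of_add_eq ha hr.le hs]

lemma sum_sq_le_greedySqSum {ι : Type*} (b : ℕ) (s : Finset ι) (n : ι → ℕ)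
    (hcap : ∀ j ∈ s, n j ≤ b) : ∑ j ∈ s, n j ^ 2 ≤ greedySqSum b (∑ j ∈ s, n j) := by
  induction s using Finset.cons_induction with
  | empty => simp [greedySqSum]
  | cons i s hi ih =>
    rw [Finset.sum_cons, Finset.sum_cons, add_comm (n i) (∑ j ∈ s, n j)]
    calc n i ^ 2 + ∑ j ∈ s, n j ^ 2
        ≤ n i ^ 2 + greedySqSum b (∑ j ∈ s, n j) :=
          Nat.add_le_add_left (ih fun j hj => hcap j (Finset.mem_cons_of_mem hj)) _
      _ ≤ greedySqSum b (∑ j ∈ s, n j + n i) :=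
          sq_add_greedySqSum_le _ (hcap i (Finset.mem_cons_self i s))

theorem sum_sq_upper_bound_general (M N : ℕ)
    (n : Fin M → ℕ) (h : ∑ j, n j = N)
    (b : ℕ)
    (hcap : ∀ j, n j ≤ b) :
    ∑ j, (n j) ^ 2 ≤ (N / b) * b ^ 2 + (N - (N / b) * b) ^ 2 := by
  have hmod : N - N / b * b = N % b := by rw [Nat.mod_eq_sub_div_mul]
  rw [hmod, ← greedySqSum, ← h]
  exact sum_sq_le_greedySqSum b Finset.univ n fun j _ => hcap j

/-- Upper bound on the sum of squares of slot counts under capacity `b = ⌈N/M⌉`: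
it is maximized when `⌊N/b⌋` slots are filled to capacity and the remainder
goes to one slot. -/
theorem sum_sq_upper_bound (M N : ℕ) (hM : 0 < M) (hN : 0 < N)
    (n : Fin M → ℕ) (h : ∑ j, n j = N)
    (b : ℕ) (hb : b = ⌈(N : ℚ) / (M : ℚ)⌉₊)
    (hcap : ∀ j, n j ≤ b) :
    ∑ j, (n j) ^ 2 ≤ (N / b) * b ^ 2 + (N - (N / b) * b) ^ 2 :=
  sum_sq_upper_bound_general M N n h b hcap
end

section
/- Let N, M ≥ 1, b = ⌈N/M⌉ ≥ 2. Define f* = M·b^2 − (2b−1)(M·b − N) and f̂ = b(N + b). Then (f̂ − f*)/f* ≤ 1, i.e., f̂ ≤ 2·f*. -/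
/-!
Write `r = M b - N` for the slack of the ceiling, so that `0 ≤ r ≤ M - 1`. Then
`2 f* - f̂ = b² (M - 1) - (3b - 2) r = b² (M - 1 - r) + (b - 1)(b - 2) r`,
and both terms are nonnegative because no integer lies strictly between `1` and `2`.
-/

theorem Int.sub_one_mul_sub_two_nonneg (b : ℤ) : 0 ≤ (b - 1) * (b - 2) := by
  rcases le_or_gt b 1 with hb | hb
  · exact mul_nonneg_of_nonpos_of_nonpos (by omega) (by omega)
  · exact mul_nonneg (by omega) (by omega)

theorem Int.three_mul_sub_two_mul_le_sq_mul {b r m : ℤ} (hr : 0 ≤ r) (hrm : r ≤ m) :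
    (3 * b - 2) * r ≤ b ^ 2 * m := by
  have hsq : 0 ≤ b ^ 2 * (m - r) := mul_nonneg (sq_nonneg b) (by omega)
  have hquad : 0 ≤ (b - 1) * (b - 2) * r := mul_nonneg (Int.sub_one_mul_sub_two_nonneg b) hr
  linear_combination hsq + hquad

theorem Int.mul_ceil_div_sub_mem_Ico {K : Type*} [Field K] [LinearOrder K]
    [IsStrictOrderedRing K] [FloorRing K] {N M : ℤ} (hM : 0 < M) :
    M * ⌈(N : K) / M⌉ - N ∈ Set.Ico 0 M := by
  have hMK : (0 : K) < M := by exact_mod_cast hM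
  have hle : (N : K) / M ≤ ⌈(N : K) / M⌉ := Int.le_ceil _
  have hlt : (⌈(N : K) / M⌉ : K) < N / M + 1 := Int.ceil_lt_add_one _
  rw [div_le_iff₀ hMK] at hle
  rw [div_add_one hMK.ne', lt_div_iff₀ hMK] at hlt
  have hupper : N ≤ M * ⌈(N : K) / M⌉ := by
    exact_mod_cast (by linarith : (N : K) ≤ M * ⌈(N : K) / M⌉)
  have hlower : M * ⌈(N : K) / M⌉ < N + M := by
    exact_mod_cast (by linarith : (M : K) * ⌈(N : K) / M⌉ < N + M)
  constructor <;> omega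

theorem approx_ratio_le_one_general (N M b : ℤ) (hM : 1 ≤ M)
    (hb : b = ⌈(N : ℚ) / (M : ℚ)⌉) :
    b * (N + b) ≤ 2 * (M * b ^ 2 - (2 * b - 1) * (M * b - N)) := by
  obtain ⟨hr, hrM⟩ := Int.mul_ceil_div_sub_mem_Ico (K := ℚ) (N := N) (by omega : 0 < M)
  rw [← hb] at hr hrM
  have key : (3 * b - 2) * (M * b - N) ≤ b ^ 2 * (M - 1) :=
    Int.three_mul_sub_two_mul_le_sq_mul hr (by omega)
  linear_combination key

/-- Approximation-ratio bound: with `b = ⌈N/M⌉ ≥ 2`,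
`f* = M·b² − (2b−1)(Mb − N)` and `f̂ = b(N + b)`, one has `f̂ ≤ 2·f*`. -/
theorem approx_ratio_le_one (N M b : ℤ) (hN : 1 ≤ N) (hM : 1 ≤ M)
    (hb : b = ⌈(N : ℚ) / (M : ℚ)⌉) (hb2 : 2 ≤ b) :
    b * (N + b) ≤ 2 * (M * b ^ 2 - (2 * b - 1) * (M * b - N)) :=
  approx_ratio_le_one_general N M b hM hb
end
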